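/- arXiv:1702.07823 — 2 statements merged into one kernel-verified Lean document; each statement's English description precedes it below -/
import Mathlib

section
/- Let G be a composite graph formed from disjoint connected subgraphs G_1,...,G_n joined through bridge nodes l_1,...,l_n via a connected backbone graph B. For any i ≠ j, the sum of resistance distances in G between all pairs of nodes drawn from V_i and V_j satisfies Σ_{u ∈ V_i} Σ_{v ∈ V_j} r(u,v) = n_j C_i(l_i) + n_i n_j r(l_i, l_j) + n_i C_j(l_j). -/
open scoped Classical
open Matrix

noncomputable section

/-- The four Moore–Penrose conditions for `B` to be the pseudoinverse of `A`. -/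
def IsMoorePenroseInv {α : Type*} [Fintype α] (A B : Matrix α α ℝ) : Prop :=
  A * B * A = A ∧ B * A * B = B ∧ (A * B)ᵀ = A * B ∧ (B * A)ᵀ = B * A

/-- The Moore–Penrose pseudoinverse of a real square matrix (it exists and is
unique; we extract it by choice). -/
noncomputable def pinv {α : Type*} [Fintype α] (A : Matrix α α ℝ) : Matrix α α ℝ :=
  if h : ∃ B, IsMoorePenroseInv A B then h.choose else 0

/-- The (real) Laplacian matrix of a simple graph. -/
noncomputable def lap {α : Type*} [Fintype α] (H : SimpleGraph α) : Matrix α α ℝ :=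
  letI := Classical.decEq α
  letI : DecidableRel H.Adj := Classical.decRel _
  H.lapMatrix ℝ

/-- The standard basis (indicator) vector `e_u`. -/
noncomputable def evec {α : Type*} [Fintype α] (u : α) : α → ℝ :=
  fun w => if w = u then 1 else 0

/-- Resistance distance `r(u,v) = (e_u - e_v)ᵀ L† (e_u - e_v)`. -/
noncomputable def resistance {α : Type*} [Fintype α] (H : SimpleGraph α) (u v : α) : ℝ :=
  (evec u - evec v) ⬝ᵥ (pinv (lap H)).mulVec (evec u - evec v)

/-- Effective resistance `Ω_H = Σ_{u<v} r(u,v) = (1/2) Σ_{u,v} r(u,v)`. -/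
noncomputable def effRes {α : Type*} [Fintype α] (H : SimpleGraph α) : ℝ :=
  (1 / 2) * ∑ u : α, ∑ v : α, resistance H u v

/-- Network coherence `H_C(H) = Ω_H / (2 |V_H|)`. -/
noncomputable def coherence {α : Type*} [Fintype α] (H : SimpleGraph α) : ℝ :=
  effRes H / (2 * Fintype.card α)

/-- Resistance centrality `C(v) = Σ_{u ≠ v} r(u,v)`. -/
noncomputable def rcentrality {α : Type*} [Fintype α] (H : SimpleGraph α) (v : α) : ℝ :=
  ∑ u ∈ Finset.univ.filter (· ≠ v), resistance H u v

/-- The composite graph built from disjoint subgraphs `G i` with bridge nodes `l i`,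
connected according to the backbone graph `B` on the indices. -/
def composite {n : ℕ} (V : Fin n → Type*) (G : ∀ i, SimpleGraph (V i))
    (l : ∀ i, V i) (B : SimpleGraph (Fin n)) : SimpleGraph (Σ i, V i) where
  Adj x y := (∃ h : x.1 = y.1, (G y.1).Adj (h ▸ x.2) y.2) ∨
    (B.Adj x.1 y.1 ∧ x.2 = l x.1 ∧ y.2 = l y.1)
  symm := ⟨by
    rintro ⟨i, u⟩ ⟨j, v⟩ (⟨h, hadj⟩ | ⟨hB, hu, hv⟩)
    · dsimp only at h
      subst h
      exact Or.inl ⟨rfl, hadj.symm⟩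
    · exact Or.inr ⟨hB.symm, hv, hu⟩⟩
  loopless := ⟨by
    rintro ⟨i, u⟩ (⟨h, hadj⟩ | ⟨hB, _, _⟩)
    · exact (G i).irrefl hadj
    · exact B.irrefl hB⟩

/-! ### Auxiliary material -/

set_option linter.unusedSectionVars false
set_option linter.unreachableTactic false
set_option linter.unusedTactic false

/-- Every real symmetric matrix has a Moore–Penrose pseudoinverse. -/
lemma exists_mpinv {α : Type*} [Fintype α] [DecidableEq α] (A : Matrix α α ℝ)
    (hA : A.IsHermitian) : ∃ B, IsMoorePenroseInv A B := by
  classical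
  set U : Matrix α α ℝ := (hA.eigenvectorUnitary : Matrix α α ℝ) with hU
  have hUU : star U * U = 1 := Unitary.coe_star_mul_self hA.eigenvectorUnitary
  set d : α → ℝ := hA.eigenvalues with hd
  have hspec : A = U * diagonal d * star U := by
    have := hA.spectral_theorem
    simpa [hU, hd] using this
  have sandwich : ∀ (X Y : Matrix α α ℝ), (U * X * star U) * (U * Y * star U)
      = U * (X * Y) * star U := by
    intro X Y
    simp only [Matrix.mul_assoc]
    rw [← Matrix.mul_assoc (star U) U, hUU, Matrix.one_mul]
  have h1 : (fun i => d i * ((d i)⁻¹ * d i)) = d := by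
    funext i
    rcases eq_or_ne (d i) 0 with h | h
    · simp [h]
    · field_simp
  have h2 : (fun i => (d i)⁻¹ * (d i * (d i)⁻¹)) = fun i => (d i)⁻¹ := by
    funext i
    rcases eq_or_ne (d i) 0 with h | h
    · simp [h]
    · field_simp
  have hsymm : ∀ (X : Matrix α α ℝ) (e : α → ℝ), X = U * diagonal e * star U → Xᵀ = X := by
    intro X e hX
    have : X.IsHermitian := by
      rw [hX]
      exact isHermitian_mul_mul_conjTranspose U
        (isHermitian_diagonal_iff.2 (fun i => IsSelfAdjoint.all _))
    simpa [Matrix.IsHermitian, Matrix.conjTranspose_eq_transpose_of_trivial] using this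
  refine ⟨U * diagonal (fun i => (d i)⁻¹) * star U, ?_, ?_, ?_, ?_⟩
  · rw [hspec, sandwich, sandwich, diagonal_mul_diagonal, diagonal_mul_diagonal]
    rw [show (fun i => d i * (d i)⁻¹ * d i) = d by simpa [mul_assoc] using h1]
  · rw [hspec, sandwich, sandwich, diagonal_mul_diagonal, diagonal_mul_diagonal]
    rw [show (fun i => (d i)⁻¹ * d i * (d i)⁻¹) = fun i => (d i)⁻¹ by simpa [mul_assoc] using h2]
  · rw [hspec, sandwich, diagonal_mul_diagonal]
    exact hsymm _ _ rfl
  · rw [hspec, sandwich, diagonal_mul_diagonal]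
    exact hsymm _ _ rfl

lemma lap_isHermitian {α : Type*} [Fintype α] (H : SimpleGraph α) :
    (lap H).IsHermitian := by
  classical
  rw [Matrix.IsHermitian, conjTranspose_eq_transpose_of_trivial]
  unfold lap
  exact SimpleGraph.isSymm_lapMatrix ℝ H

lemma lap_mp {α : Type*} [Fintype α] (H : SimpleGraph α) :
    IsMoorePenroseInv (lap H) (pinv (lap H)) := by
  classical
  have hex := exists_mpinv (lap H) (lap_isHermitian H)
  rw [pinv, dif_pos hex]
  exact hex.choose_spec

lemma dotProduct_evec {α : Type*} [Fintype α] (f : α → ℝ) (u : α) :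
    f ⬝ᵥ evec u = f u := by
  classical
  simp [dotProduct, evec, mul_ite]

/-- Resistance distance as a potential difference: if `L f = e_u - e_v` then
`r(u,v) = f(u) - f(v)`. -/
lemma resistance_eq_sub {α : Type*} [Fintype α] (H : SimpleGraph α) (u v : α)
    (f : α → ℝ) (hf : (lap H).mulVec f = evec u - evec v) :
    resistance H u v = f u - f v := by
  classical
  set L := lap H with hL
  set P := pinv L with hP
  have hLP : L * P * L = L := (lap_mp H).1
  have hLt : Lᵀ = L := by
    have := lap_isHermitian H
    rwa [Matrix.IsHermitian, conjTranspose_eq_transpose_of_trivial] at this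
  have : resistance H u v = (L *ᵥ f) ⬝ᵥ P *ᵥ (L *ᵥ f) := by
    rw [resistance, ← hf]
  rw [this, mulVec_mulVec, ← hLt, ← vecMul_transpose, hLt, ← dotProduct_mulVec, mulVec_mulVec,
    ← Matrix.mul_assoc, hLt, hLP, hf, dotProduct_sub, dotProduct_evec, dotProduct_evec]

lemma resistance_self {α : Type*} [Fintype α] (H : SimpleGraph α) (u : α) :
    resistance H u u = 0 := by
  simp [resistance]

lemma resistance_comm {α : Type*} [Fintype α] (H : SimpleGraph α) (u v : α) :
    resistance H u v = resistance H v u := by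
  have h : evec v - evec u = -(evec u - evec v) := by ring
  rw [resistance, resistance, h, mulVec_neg, dotProduct_neg, neg_dotProduct, neg_neg]

lemma lap_eq {α : Type*} [Fintype α] [DecidableEq α] (H : SimpleGraph α)
    [DecidableRel H.Adj] : lap H = H.lapMatrix ℝ := by
  unfold lap
  congr!

/-- For a connected graph, `e_u - e_v` lies in the range of the Laplacian. -/
lemma exists_potential {α : Type*} [Fintype α] (H : SimpleGraph α)
    (hH : H.Connected) (u v : α) :
    ∃ f : α → ℝ, (lap H).mulVec f = evec u - evec v := by
  classical
  have hα : Nonempty α := hH.nonempty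
  set L := H.lapMatrix ℝ with hLdef
  set T := Matrix.toLin' L with hTdef
  have hker : LinearMap.ker T = Submodule.span ℝ {(fun _ => 1 : α → ℝ)} := by
    apply le_antisymm
    · intro x hx
      have hx0 : T x = 0 := hx
      rw [hTdef, hLdef, Matrix.toLin'_apply, SimpleGraph.lapMatrix_mulVec_eq_zero_iff_forall_reachable] at hx0
      obtain ⟨a⟩ := hα
      have : x = x a • (fun _ => 1 : α → ℝ) := by
        funext b
        simp [hx0 b a (hH.preconnected b a)]
      rw [this]
      exact Submodule.smul_mem _ _ (Submodule.mem_span_singleton_self _)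
    · rw [Submodule.span_singleton_le_iff_mem, LinearMap.mem_ker, hTdef, Matrix.toLin'_apply,
        hLdef]
      exact SimpleGraph.lapMatrix_mulVec_const_eq_zero H
  have hkerrank : Module.finrank ℝ (LinearMap.ker T) = 1 := by
    rw [hker]
    apply finrank_span_singleton
    intro h
    obtain ⟨a⟩ := hα
    have := congrFun h a
    simp at this
  have hrn := LinearMap.finrank_range_add_finrank_ker T
  rw [hkerrank] at hrn
  set S : (α → ℝ) →ₗ[ℝ] ℝ := ∑ a : α, LinearMap.proj a with hSdef
  have hSapp : ∀ f : α → ℝ, S f = ∑ a : α, f a := by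
    intro f
    simp [hSdef, LinearMap.proj]
  have hSsurj : LinearMap.range S = ⊤ := by
    rw [LinearMap.range_eq_top]
    intro c
    refine ⟨fun _ => c / (Fintype.card α : ℝ), ?_⟩
    rw [hSapp]
    have hc : (Fintype.card α : ℝ) ≠ 0 := by
      simp [Fintype.card_ne_zero]
    rw [Finset.sum_const, Finset.card_univ, nsmul_eq_mul]
    field_simp
  have hSrank := LinearMap.finrank_range_add_finrank_ker S
  rw [hSsurj] at hSrank
  simp only [finrank_top, Module.finrank_self] at hSrank
  have hle : LinearMap.range T ≤ LinearMap.ker S := by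
    rintro _ ⟨f, rfl⟩
    rw [LinearMap.mem_ker, hSapp, hTdef]
    simp only [Matrix.toLin'_apply]
    have hcol : ∀ b : α, ∑ a : α, L a b = 0 := by
      intro b
      have h1 : (L *ᵥ (fun _ => 1 : α → ℝ)) b = 0 := by
        rw [hLdef, SimpleGraph.lapMatrix_mulVec_const_eq_zero H]
        rfl
      have hsymm : ∀ a b : α, L a b = L b a := by
        intro a b
        have := (SimpleGraph.isSymm_lapMatrix H (R := ℝ))
        exact (Matrix.IsSymm.apply this b a)
      calc ∑ a : α, L a b = ∑ a : α, L b a := by simp_rw [hsymm]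
        _ = (L *ᵥ (fun _ => 1 : α → ℝ)) b := by simp [Matrix.mulVec, dotProduct]
        _ = 0 := h1
    calc ∑ a : α, (L *ᵥ f) a = ∑ a : α, ∑ b : α, L a b * f b := by
          simp [Matrix.mulVec, dotProduct]
      _ = ∑ b : α, (∑ a : α, L a b) * f b := by
          rw [Finset.sum_comm]
          simp_rw [Finset.sum_mul]
      _ = 0 := by simp [hcol]
  have heq : LinearMap.range T = LinearMap.ker S := by
    apply Submodule.eq_of_le_of_finrank_eq hle
    have hdim : Module.finrank ℝ (α → ℝ) = Fintype.card α := by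
      simp [Module.finrank_pi]
    omega
  have hmem : evec u - evec v ∈ LinearMap.ker S := by
    rw [LinearMap.mem_ker, map_sub]
    have : ∀ w : α, S (evec w) = 1 := by
      intro w
      rw [hSapp]
      simp [evec]
    rw [this, this, sub_self]
  rw [← heq] at hmem
  obtain ⟨f, hf⟩ := hmem
  refine ⟨f, ?_⟩
  rw [lap_eq, ← hLdef, ← Matrix.toLin'_apply, ← hTdef, hf]

lemma lap_mulVec_eq {α : Type*} [Fintype α] (H : SimpleGraph α) (f : α → ℝ) (x : α) :
    ((lap H).mulVec f) x = ∑ y : α, if H.Adj x y then f x - f y else 0 := by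
  classical
  rw [lap_eq, SimpleGraph.lapMatrix_mulVec_apply]
  have h1 : ∑ y : α, (if H.Adj x y then f x - f y else 0)
      = ∑ y ∈ H.neighborFinset x, (f x - f y) := by
    rw [← Finset.sum_filter, SimpleGraph.neighborFinset_eq_filter]
  rw [h1, Finset.sum_sub_distrib, Finset.sum_const, nsmul_eq_mul]
  rw [← SimpleGraph.card_neighborFinset_eq_degree]

section Composite

variable {n : ℕ} (V : Fin n → Type*) [∀ i, Fintype (V i)]
  (G : ∀ i, SimpleGraph (V i)) (l : ∀ i, V i) (B : SimpleGraph (Fin n))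

lemma composite_adj_same (i : Fin n) (x y : V i) :
    (composite V G l B).Adj ⟨i, x⟩ ⟨i, y⟩ ↔ (G i).Adj x y := by
  constructor
  · rintro (⟨h, hadj⟩ | ⟨hB, _, _⟩)
    · have : h = rfl := Subsingleton.elim _ _
      rw [this] at hadj
      exact hadj
    · exact absurd hB B.irrefl
  · intro h
    exact Or.inl ⟨rfl, h⟩

lemma composite_adj_ne {i k : Fin n} (hki : k ≠ i) (x : V k) (y : V i) :
    (composite V G l B).Adj ⟨k, x⟩ ⟨i, y⟩ ↔ (B.Adj k i ∧ x = l k ∧ y = l i) := by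
  constructor
  · rintro (⟨h, hadj⟩ | hb)
    · exact absurd h hki
    · exact hb
  · exact Or.inr

/-- The extension of a potential on `V i` by the constant `g (l i)`. -/
noncomputable def extendPot (i : Fin n) (g : V i → ℝ) : (Σ k, V k) → ℝ :=
  fun p => if h : p.1 = i then g (h ▸ p.2) else g (l i)

lemma extendPot_apply_self (i : Fin n) (g : V i → ℝ) (x : V i) :
    extendPot V l i g ⟨i, x⟩ = g x := by
  simp [extendPot]

lemma extendPot_apply_ne (i : Fin n) (g : V i → ℝ) {k : Fin n} (hk : k ≠ i) (x : V k) :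
    extendPot V l i g ⟨k, x⟩ = g (l i) := by
  simp [extendPot, hk]

lemma extendPot_bridge (i : Fin n) (g : V i → ℝ) (k : Fin n) :
    extendPot V l i g ⟨k, l k⟩ = g (l i) := by
  rcases eq_or_ne k i with rfl | hk
  · simp [extendPot]
  · simp [extendPot, hk]

lemma comp_mulVec_extendPot (i : Fin n) (g : V i → ℝ) (p : Σ k, V k) :
    ((lap (composite V G l B)).mulVec (extendPot V l i g)) p =
      if h : p.1 = i then ((lap (G i)).mulVec g) (h ▸ p.2) else 0 := by
  classical
  obtain ⟨k, x⟩ := p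
  rw [lap_mulVec_eq, ← Finset.univ_sigma_univ, Finset.sum_sigma]
  rcases eq_or_ne k i with rfl | hk
  · rw [dif_pos rfl]
    show _ = ((lap (G k)).mulVec g) x
    rw [lap_mulVec_eq]
    rw [Finset.sum_eq_single_of_mem k (Finset.mem_univ k)]
    · apply Finset.sum_congr rfl
      intro y _
      rw [composite_adj_same]
      rcases Classical.em ((G k).Adj x y) with h | h
      · rw [if_pos h, if_pos h, extendPot_apply_self, extendPot_apply_self]
      · rw [if_neg h, if_neg h]
    · intro m _ hm
      apply Finset.sum_eq_zero
      intro y _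
      rcases Classical.em ((composite V G l B).Adj ⟨k, x⟩ ⟨m, y⟩) with h | h
      · rw [if_pos h]
        rw [composite_adj_ne V G l B (Ne.symm hm)] at h
        obtain ⟨-, hx, hy⟩ := h
        subst hx
        subst hy
        rw [extendPot_bridge, extendPot_bridge, sub_self]
      · rw [if_neg h]
  · rw [dif_neg hk]
    apply Finset.sum_eq_zero
    intro m _
    apply Finset.sum_eq_zero
    intro y _
    rcases Classical.em ((composite V G l B).Adj ⟨k, x⟩ ⟨m, y⟩) with h | h
    · rw [if_pos h]
      rcases h with ⟨heq, hadj⟩ | ⟨hB, hx, hy⟩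
      · dsimp only at heq
        subst heq
        rw [extendPot_apply_ne V l i g hk, extendPot_apply_ne V l i g hk, sub_self]
      · dsimp only at hx hy
        subst hx
        subst hy
        rw [extendPot_bridge, extendPot_bridge, sub_self]
    · rw [if_neg h]

lemma comp_mulVec_backbone (h : Fin n → ℝ) (p : Σ k, V k) :
    ((lap (composite V G l B)).mulVec (fun q => h q.1)) p =
      if p.2 = l p.1 then ((lap B).mulVec h) p.1 else 0 := by
  classical
  obtain ⟨k, x⟩ := p
  rw [lap_mulVec_eq, ← Finset.univ_sigma_univ, Finset.sum_sigma]
  have inner : ∀ m : Fin n, (∑ y : V m,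
      if (composite V G l B).Adj ⟨k, x⟩ ⟨m, y⟩ then h k - h m else 0) =
      if (B.Adj k m ∧ x = l k) then h k - h m else 0 := by
    intro m
    rcases eq_or_ne m k with rfl | hm
    · rw [if_neg (by rintro ⟨hB, -⟩; exact B.irrefl hB)]
      apply Finset.sum_eq_zero
      intro y _
      rw [sub_self, ite_self]
    · rcases Classical.em (B.Adj k m ∧ x = l k) with ⟨hB, hx⟩ | hnot
      · subst hx
        rw [if_pos ⟨hB, rfl⟩]
        rw [Finset.sum_eq_single_of_mem (l m) (Finset.mem_univ _)]
        · rw [if_pos ((composite_adj_ne V G l B (Ne.symm hm) _ _).2 ⟨hB, rfl, rfl⟩)]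
        · intro y _ hy
          rw [if_neg]
          rw [composite_adj_ne V G l B (Ne.symm hm)]
          rintro ⟨-, -, rfl⟩
          exact hy rfl
      · rw [if_neg hnot]
        apply Finset.sum_eq_zero
        intro y _
        rw [if_neg]
        rw [composite_adj_ne V G l B (Ne.symm hm)]
        rintro ⟨hB, hx, -⟩
        exact hnot ⟨hB, hx⟩
  calc ∑ m : Fin n, ∑ y : V m,
        (if (composite V G l B).Adj ⟨k, x⟩ ⟨m, y⟩ then (fun q : Σ k, V k => h q.1) ⟨k, x⟩
          - (fun q : Σ k, V k => h q.1) ⟨m, y⟩ else 0)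
      = ∑ m : Fin n, if (B.Adj k m ∧ x = l k) then h k - h m else 0 := by
        exact Finset.sum_congr rfl fun m _ => inner m
    _ = if x = l k then ((lap B).mulVec h) k else 0 := by
        rcases Classical.em (x = l k) with hx | hx
        · rw [if_pos hx, lap_mulVec_eq]
          apply Finset.sum_congr rfl
          intro m _
          simp [hx]
        · rw [if_neg hx]
          apply Finset.sum_eq_zero
          intro m _
          rw [if_neg (by rintro ⟨-, hc⟩; exact hx hc)]

lemma extend_evec (i : Fin n) (u w : V i) (p : Σ k, V k) :
    (if h : p.1 = i then (evec u - evec w : V i → ℝ) (h ▸ p.2) else 0) =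
      evec (⟨i, u⟩ : Σ k, V k) p - evec (⟨i, w⟩ : Σ k, V k) p := by
  classical
  obtain ⟨k, x⟩ := p
  rcases eq_or_ne k i with rfl | hk
  · rw [dif_pos rfl]
    show (evec u - evec w) x = _
    simp [evec, Sigma.mk.inj_iff]
  · rw [dif_neg hk]
    simp [evec, Sigma.mk.inj_iff, hk]

lemma backbone_evec (i j : Fin n) (hij : i ≠ j) (p : Σ k, V k) :
    (if p.2 = l p.1 then (evec i - evec j : Fin n → ℝ) p.1 else 0) =
      evec (⟨i, l i⟩ : Σ k, V k) p - evec (⟨j, l j⟩ : Σ k, V k) p := by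
  classical
  obtain ⟨k, x⟩ := p
  show (if x = l k then (evec i - evec j : Fin n → ℝ) k else 0) = _
  rcases Classical.em (x = l k) with hx | hx
  · subst hx
    rw [if_pos rfl]
    rcases eq_or_ne k i with rfl | h1
    · simp [evec, Sigma.mk.inj_iff, hij, hij.symm, Ne.symm hij]
    · rcases eq_or_ne k j with rfl | h2
      · simp [evec, Sigma.mk.inj_iff, h1]
      · simp [evec, Sigma.mk.inj_iff, h1, h2]
  · rw [if_neg hx]
    have h1 : (⟨k, x⟩ : Σ k, V k) ≠ ⟨i, l i⟩ := by
      rintro h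
      obtain ⟨rfl, hx2⟩ := Sigma.mk.inj_iff.1 h
      exact hx (eq_of_heq hx2)
    have h2 : (⟨k, x⟩ : Σ k, V k) ≠ ⟨j, l j⟩ := by
      rintro h
      obtain ⟨rfl, hx2⟩ := Sigma.mk.inj_iff.1 h
      exact hx (eq_of_heq hx2)
    simp [evec, h1, h2]

/-- The key decomposition: resistance between nodes of distinct subgraphs splits as
a sum of three resistances. -/
lemma resistance_decomp (hG : ∀ i, (G i).Connected) (hB : B.Connected)
    (i j : Fin n) (hij : i ≠ j) (u : V i) (v : V j) :
    resistance (composite V G l B) ⟨i, u⟩ ⟨j, v⟩ =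
      resistance (G i) u (l i) + resistance (composite V G l B) ⟨i, l i⟩ ⟨j, l j⟩ +
      resistance (G j) (l j) v := by
  classical
  obtain ⟨g, hg⟩ := exists_potential (G i) (hG i) u (l i)
  obtain ⟨g', hg'⟩ := exists_potential (G j) (hG j) (l j) v
  obtain ⟨h, hh⟩ := exists_potential B hB i j
  -- middle resistance
  have hf2 : (lap (composite V G l B)).mulVec (fun q => h q.1) =
      evec (⟨i, l i⟩ : Σ k, V k) - evec (⟨j, l j⟩ : Σ k, V k) := by
    funext p
    rw [comp_mulVec_backbone, hh, Pi.sub_apply]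
    exact backbone_evec V l i j hij p
  have hmid : resistance (composite V G l B) ⟨i, l i⟩ ⟨j, l j⟩ = h i - h j :=
    resistance_eq_sub _ _ _ _ hf2
  -- total potential
  set f : (Σ k, V k) → ℝ :=
    extendPot V l i g + (fun q => h q.1) + extendPot V l j g' with hfdef
  have hf : (lap (composite V G l B)).mulVec f =
      evec (⟨i, u⟩ : Σ k, V k) - evec (⟨j, v⟩ : Σ k, V k) := by
    funext p
    rw [hfdef, mulVec_add, mulVec_add, Pi.add_apply, Pi.add_apply]
    rw [comp_mulVec_extendPot, comp_mulVec_backbone, comp_mulVec_extendPot, hg, hg', hh]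
    have e1 := extend_evec V (i := i) u (l i) p
    have e2 := backbone_evec V l i j hij p
    have e3 := extend_evec V (i := j) (l j) v p
    rw [show (if h : p.1 = i then (evec u - evec (l i) : V i → ℝ) (h ▸ p.2) else 0) = _ from e1,
      show (if p.2 = l p.1 then (evec i - evec j : Fin n → ℝ) p.1 else 0) = _ from e2,
      show (if h : p.1 = j then (evec (l j) - evec v : V j → ℝ) (h ▸ p.2) else 0) = _ from e3,
      Pi.sub_apply]
    ring
  have hmain : resistance (composite V G l B) ⟨i, u⟩ ⟨j, v⟩ = f ⟨i, u⟩ - f ⟨j, v⟩ :=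
    resistance_eq_sub _ _ _ _ hf
  have hri : resistance (G i) u (l i) = g u - g (l i) := resistance_eq_sub _ _ _ _ hg
  have hrj : resistance (G j) (l j) v = g' (l j) - g' v := resistance_eq_sub _ _ _ _ hg'
  have hfu : f ⟨i, u⟩ = g u + h i + g' (l j) := by
    rw [hfdef]
    simp only [Pi.add_apply]
    rw [extendPot_apply_self, extendPot_apply_ne V l j g' hij]
  have hfv : f ⟨j, v⟩ = g (l i) + h j + g' v := by
    rw [hfdef]
    simp only [Pi.add_apply]
    rw [extendPot_apply_self, extendPot_apply_ne V l i g (Ne.symm hij)]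
  rw [hmain, hri, hrj, hmid, hfu, hfv]
  ring

end Composite

lemma sum_resistance_eq_rcentrality {α : Type*} [Fintype α] (H : SimpleGraph α) (w : α) :
    ∑ u : α, resistance H u w = rcentrality H w := by
  classical
  rw [rcentrality, ← Finset.sum_filter_add_sum_filter_not Finset.univ (· ≠ w)]
  have : Finset.univ.filter (¬ · ≠ w) = {w} := by
    ext a
    simp
  rw [this, Finset.sum_singleton, resistance_self, add_zero]

/-- In a composite graph, the sum of the resistance distances
between all pairs of nodes drawn from two distinct subgraphs. -/
theorem sum_resistance_between_subgraphs
    {n : ℕ} (hn : 2 ≤ n)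
    (V : Fin n → Type*) [∀ i, Fintype (V i)]
    (G : ∀ i, SimpleGraph (V i)) (l : ∀ i, V i) (B : SimpleGraph (Fin n))
    (hG : ∀ i, (G i).Connected) (hB : B.Connected)
    (i j : Fin n) (hij : i ≠ j) :
    ∑ u : V i, ∑ v : V j, resistance (composite V G l B) ⟨i, u⟩ ⟨j, v⟩ =
      (Fintype.card (V j) : ℝ) * rcentrality (G i) (l i) +
      (Fintype.card (V i) : ℝ) * (Fintype.card (V j) : ℝ) *
        resistance (composite V G l B) ⟨i, l i⟩ ⟨j, l j⟩ +
      (Fintype.card (V i) : ℝ) * rcentrality (G j) (l j) := by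
  classical
  have hdecomp := resistance_decomp V G l B hG hB i j hij
  calc ∑ u : V i, ∑ v : V j, resistance (composite V G l B) ⟨i, u⟩ ⟨j, v⟩
      = ∑ u : V i, ∑ v : V j, (resistance (G i) u (l i) +
          resistance (composite V G l B) ⟨i, l i⟩ ⟨j, l j⟩ + resistance (G j) (l j) v) := by
        exact Finset.sum_congr rfl fun u _ => Finset.sum_congr rfl fun v _ => hdecomp u v
    _ = (Fintype.card (V j) : ℝ) * (∑ u : V i, resistance (G i) u (l i)) +
        (Fintype.card (V i) : ℝ) * (Fintype.card (V j) : ℝ) *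
          resistance (composite V G l B) ⟨i, l i⟩ ⟨j, l j⟩ +
        (Fintype.card (V i) : ℝ) * (∑ v : V j, resistance (G j) (l j) v) := by
        simp only [Finset.sum_add_distrib, Finset.sum_const, Finset.card_univ, nsmul_eq_mul,
          ← Finset.mul_sum]
        ring
    _ = _ := by
        rw [sum_resistance_eq_rcentrality]
        have : ∑ v : V j, resistance (G j) (l j) v = rcentrality (G j) (l j) := by
          rw [← sum_resistance_eq_rcentrality]
          exact Finset.sum_congr rfl fun v _ => resistance_comm _ _ _
        rw [this]
end
end

section
/- Let G be the composite graph in which each of the n subgraphs G_i is a path graph on m vertices with its bridge node chosen as an endpoint of the path, and the backbone graph B is a path l_1 − l_2 − ... − l_n on the n bridge nodes. Then, with N = nm, H_C(G) = nm(m²−1)/(12N) + nm²(n²−1)/(12N) + nm²(m−1)(n−1)/(4N); that is, this graph attains the upper bound on coherence among all composite graphs with n subgraphs of m vertices each. -/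
open scoped Classical
open Matrix

noncomputable section

/-!
The comb is a tree, so its resistance distance is its path metric `d`. For the distance
matrix `D` of a tree, `L D = τ 1ᵀ - 2 I` with `τ u = 2 - deg u`, and this makes `-½ P D P`
(`P` the centering projection) the Moore–Penrose inverse of the Laplacian `L`; hence
`r(u, v) = d(u, v)`. The coherence then comes from summing the comb metric
`d((i, j), (k, l)) = |j - l|` if `i = k`, and `|i - k| + j + l` otherwise.
-/

theorem IsMoorePenroseInv.unique {α : Type*} [Fintype α] {A B C : Matrix α α ℝ}
    (hB : IsMoorePenroseInv A B) (hC : IsMoorePenroseInv A C) : B = C := by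
  obtain ⟨hB1, hB2, hB3, hB4⟩ := hB
  obtain ⟨hC1, hC2, hC3, hC4⟩ := hC
  have hAB : A * B = A * C :=
    calc A * B = (A * B)ᵀ := hB3.symm
      _ = (A * C * (A * B))ᵀ := by rw [← Matrix.mul_assoc, hC1]
      _ = (A * B)ᵀ * (A * C)ᵀ := transpose_mul _ _
      _ = A * C := by rw [hB3, hC3, ← Matrix.mul_assoc, hB1]
  have hBA : B * A = C * A :=
    calc B * A = (B * A)ᵀ := hB4.symm
      _ = (B * A * (C * A))ᵀ := by
        rw [show B * A * (C * A) = B * (A * C * A) by simp only [Matrix.mul_assoc], hC1]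
      _ = (C * A)ᵀ * (B * A)ᵀ := transpose_mul _ _
      _ = C * A := by rw [hC4, hB4, Matrix.mul_assoc, ← Matrix.mul_assoc A, hB1]
  calc B = C * A * B := by rw [← hBA, hB2]
    _ = C := by rw [Matrix.mul_assoc, hAB, ← Matrix.mul_assoc, hC2]

theorem IsMoorePenroseInv.pinv_eq {α : Type*} [Fintype α] {A B : Matrix α α ℝ}
    (h : IsMoorePenroseInv A B) : pinv A = B := by
  have hex : ∃ C, IsMoorePenroseInv A C := ⟨B, h⟩
  rw [pinv, dif_pos hex]
  exact hex.choose_spec.unique h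

def onesMatrix (α : Type*) : Matrix α α ℝ := of fun _ _ => 1

theorem transpose_onesMatrix {α : Type*} : (onesMatrix α)ᵀ = onesMatrix α := rfl

def centeringMatrix (α : Type*) [Fintype α] : Matrix α α ℝ :=
  1 - (Fintype.card α : ℝ)⁻¹ • onesMatrix α

section Centering

variable {α : Type*} [Fintype α]

theorem onesMatrix_mul_onesMatrix :
    onesMatrix α * onesMatrix α = (Fintype.card α : ℝ) • onesMatrix α := by
  ext u v
  simp [onesMatrix, mul_apply]

theorem transpose_centeringMatrix : (centeringMatrix α)ᵀ = centeringMatrix α := by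
  rw [centeringMatrix, transpose_sub, transpose_one, transpose_smul, transpose_onesMatrix]

theorem onesMatrix_mul_centeringMatrix [Nonempty α] :
    onesMatrix α * centeringMatrix α = 0 := by
  rw [centeringMatrix, Matrix.mul_sub, Matrix.mul_one, Matrix.mul_smul,
    onesMatrix_mul_onesMatrix, smul_smul, inv_mul_cancel₀ (by positivity), one_smul, sub_self]

theorem centeringMatrix_mul_self [Nonempty α] :
    centeringMatrix α * centeringMatrix α = centeringMatrix α := by
  nth_rewrite 1 [centeringMatrix]
  rw [Matrix.sub_mul, Matrix.one_mul, Matrix.smul_mul, onesMatrix_mul_centeringMatrix,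
    smul_zero, sub_zero]

theorem mul_centeringMatrix_of_mul_onesMatrix {A : Matrix α α ℝ} (h : A * onesMatrix α = 0) :
    A * centeringMatrix α = A := by
  rw [centeringMatrix, Matrix.mul_sub, Matrix.mul_one, Matrix.mul_smul, h, smul_zero, sub_zero]

theorem constRows_mul_centeringMatrix [Nonempty α] (c : α → ℝ) :
    (of fun u _ => c u : Matrix α α ℝ) * centeringMatrix α = 0 := by
  have hJ : (of fun u _ => c u : Matrix α α ℝ) * onesMatrix α
      = (Fintype.card α : ℝ) • of fun u _ => c u := by
    ext u v
    simp [onesMatrix, mul_apply, mul_comm]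
  rw [centeringMatrix, Matrix.mul_sub, Matrix.mul_one, Matrix.mul_smul, hJ, smul_smul,
    inv_mul_cancel₀ (by positivity), one_smul, sub_self]

theorem centeringMatrix_mulVec_of_sum_eq_zero {x : α → ℝ} (hx : ∑ u, x u = 0) :
    centeringMatrix α *ᵥ x = x := by
  have hJ : onesMatrix α *ᵥ x = 0 := by
    ext u
    simp [onesMatrix, mulVec, dotProduct, hx]
  rw [centeringMatrix, sub_mulVec, one_mulVec, smul_mulVec, hJ, smul_zero, sub_zero]

theorem isMoorePenroseInv_of_mul_eq [Nonempty α] {A D : Matrix α α ℝ} {c : α → ℝ}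
    (hA : Aᵀ = A) (hAJ : A * onesMatrix α = 0) (hD : Dᵀ = D)
    (hAD : A * D = (of fun u _ => c u) - (2 : ℝ) • 1) :
    IsMoorePenroseInv A ((-2⁻¹ : ℝ) • (centeringMatrix α * D * centeringMatrix α)) := by
  have hPA : centeringMatrix α * A = A := by
    rw [← transpose_transpose (centeringMatrix α * A), transpose_mul, hA,
      transpose_centeringMatrix, mul_centeringMatrix_of_mul_onesMatrix hAJ, hA]
  have hB : ((-2⁻¹ : ℝ) • (centeringMatrix α * D * centeringMatrix α))ᵀ
      = (-2⁻¹ : ℝ) • (centeringMatrix α * D * centeringMatrix α) := by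
    rw [transpose_smul, transpose_mul, transpose_mul, transpose_centeringMatrix, hD,
      Matrix.mul_assoc]
  have hAB : A * ((-2⁻¹ : ℝ) • (centeringMatrix α * D * centeringMatrix α))
      = centeringMatrix α := by
    rw [Matrix.mul_smul, ← Matrix.mul_assoc, ← Matrix.mul_assoc,
      mul_centeringMatrix_of_mul_onesMatrix hAJ, hAD, Matrix.sub_mul,
      constRows_mul_centeringMatrix, Matrix.smul_mul, Matrix.one_mul, zero_sub, smul_neg,
      smul_smul]
    norm_num
  have hBA : ((-2⁻¹ : ℝ) • (centeringMatrix α * D * centeringMatrix α)) * A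
      = centeringMatrix α := by
    rw [← transpose_transpose (_ * A), transpose_mul, hA, hB, hAB, transpose_centeringMatrix]
  refine ⟨?_, ?_, ?_, ?_⟩
  · rw [hAB, hPA]
  · rw [hBA, Matrix.mul_smul, ← Matrix.mul_assoc, ← Matrix.mul_assoc, centeringMatrix_mul_self]
  · rw [hAB, transpose_centeringMatrix]
  · rw [hBA, transpose_centeringMatrix]

end Centering

theorem lap_eq_lapMatrix {α : Type*} [Fintype α] [DecidableEq α] (G : SimpleGraph α)
    [DecidableRel G.Adj] : lap G = G.lapMatrix ℝ := by
  unfold lap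
  congr <;> exact Subsingleton.elim _ _

theorem transpose_lap {α : Type*} [Fintype α] (G : SimpleGraph α) : (lap G)ᵀ = lap G := by
  rw [lap_eq_lapMatrix]
  exact G.isSymm_lapMatrix ℝ

theorem lap_mul_onesMatrix {α : Type*} [Fintype α] (G : SimpleGraph α) :
    lap G * onesMatrix α = 0 := by
  ext u v
  have h : (lap G * onesMatrix α) u v = (lap G *ᵥ fun _ => 1) u := rfl
  rw [h, lap_eq_lapMatrix, G.lapMatrix_mulVec_const_eq_zero, Pi.zero_apply, Matrix.zero_apply]

theorem dotProduct_evec_sub {α : Type*} [Fintype α] (u v : α) (g : α → ℝ) :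
    (evec u - evec v) ⬝ᵥ g = g u - g v := by
  have h : ∀ w : α, evec w = Pi.single w 1 := fun w =>
    funext fun x => by simp [evec, Pi.single_apply]
  rw [h, h, sub_dotProduct, single_one_dotProduct, single_one_dotProduct]

namespace SimpleGraph

variable {α : Type*} [Fintype α]

/-- `d` is the path metric of a tree `G`: for `u ≠ v`, exactly one neighbour of `u`
(the next vertex on the path to `v`) is closer to `v`, and all others are farther. -/
structure IsTreeDistance (G : SimpleGraph α) (d : α → α → ℝ) : Prop where
  self_eq_zero : ∀ u, d u u = 0
  symm : ∀ u v, d u v = d v u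
  adj_eq_one : ∀ ⦃u w⦄, G.Adj u w → d u w = 1
  exists_step : ∀ ⦃u v⦄, u ≠ v → ∃ w, G.Adj u w ∧ d w v = d u v - 1 ∧
    ∀ w', G.Adj u w' → w' ≠ w → d w' v = d u v + 1

namespace IsTreeDistance

variable {G : SimpleGraph α} {d : α → α → ℝ}

theorem sum_neighborFinset (hd : G.IsTreeDistance d) (u v : α) :
    ∑ w ∈ G.neighborFinset u, d w v = G.degree u * (d u v + 1) - if u = v then 0 else 2 := by
  rw [← card_neighborFinset_eq_degree]
  by_cases huv : u = v
  · subst huv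
    rw [Finset.sum_congr rfl fun w hw => by
      rw [hd.symm, hd.adj_eq_one ((mem_neighborFinset _ _ _).1 hw)]]
    simp [hd.self_eq_zero]
  · obtain ⟨w, hadj, hw, hother⟩ := hd.exists_step huv
    have hmem : w ∈ G.neighborFinset u := (mem_neighborFinset _ _ _).2 hadj
    rw [← Finset.add_sum_erase _ _ hmem, Finset.sum_congr rfl fun w' hw' =>
      hother w' ((mem_neighborFinset _ _ _).1 (Finset.mem_of_mem_erase hw'))
        (Finset.ne_of_mem_erase hw'), Finset.sum_const, Finset.card_erase_of_mem hmem,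
      nsmul_eq_mul, if_neg huv, hw]
    have hpos : 1 ≤ (G.neighborFinset u).card := Finset.card_pos.2 ⟨w, hmem⟩
    push_cast [hpos]
    ring

theorem lap_mul (hd : G.IsTreeDistance d) :
    lap G * of d = (of fun u _ => 2 - (G.degree u : ℝ)) - (2 : ℝ) • 1 := by
  ext u v
  have h : (lap G * of d) u v = (lap G *ᵥ fun w => d w v) u := rfl
  rw [h, lap_eq_lapMatrix, lapMatrix_mulVec_apply, hd.sum_neighborFinset]
  rcases eq_or_ne u v with rfl | huv
  · simp [hd.self_eq_zero]
  · simp [huv]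
    ring

theorem resistance_eq (hd : G.IsTreeDistance d) (u v : α) : resistance G u v = d u v := by
  have : Nonempty α := ⟨u⟩
  have hD : (of d)ᵀ = of d := by
    ext a b
    exact hd.symm b a
  have hMP := isMoorePenroseInv_of_mul_eq (transpose_lap G) (lap_mul_onesMatrix G) hD hd.lap_mul
  have hsum : ∑ w, (evec u - evec v) w = 0 := by
    simpa [dotProduct] using dotProduct_evec_sub u v (fun _ => 1)
  have hPx := centeringMatrix_mulVec_of_sum_eq_zero hsum
  have hxP : ∀ y,
      (evec u - evec v) ⬝ᵥ (centeringMatrix α *ᵥ y) = (evec u - evec v) ⬝ᵥ y := by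
    intro y
    rw [dotProduct_mulVec, ← mulVec_transpose, transpose_centeringMatrix, hPx]
  have hDx : of d *ᵥ (evec u - evec v) = fun w => d w u - d w v := by
    ext w
    exact (dotProduct_comm _ _).trans (dotProduct_evec_sub u v (d w))
  rw [resistance, hMP.pinv_eq, smul_mulVec, ← mulVec_mulVec, ← mulVec_mulVec, hPx,
    dotProduct_smul, hxP, hDx, dotProduct_evec_sub, hd.self_eq_zero, hd.self_eq_zero,
    hd.symm v u, smul_eq_mul]
  ring

end IsTreeDistance

end SimpleGraph

theorem composite_const_adj {n : ℕ} {W : Type*} (H : SimpleGraph W) (b : W)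
    (B : SimpleGraph (Fin n)) {u w : Σ _ : Fin n, W} :
    (composite (fun _ => W) (fun _ => H) (fun _ => b) B).Adj u w ↔
      (u.1 = w.1 ∧ H.Adj u.2 w.2) ∨ (B.Adj u.1 w.1 ∧ u.2 = b ∧ w.2 = b) := by
  obtain ⟨i, x⟩ := u
  obtain ⟨k, y⟩ := w
  refine or_congr ⟨?_, ?_⟩ Iff.rfl <;>
  · rintro ⟨h, hadj⟩
    dsimp only at h
    subst h
    exact ⟨rfl, hadj⟩

/-- Adjacency in the infinite comb on `ℕ × ℕ`: a spine `ℕ × {0}` with a tooth `{i} × ℕ`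
hanging from every `(i, 0)`. -/
def CombAdj (p q : ℕ × ℕ) : Prop :=
  (p.1 = q.1 ∧ (p.2 + 1 = q.2 ∨ q.2 + 1 = p.2)) ∨
    ((p.1 + 1 = q.1 ∨ q.1 + 1 = p.1) ∧ p.2 = 0 ∧ q.2 = 0)

def combDist (p q : ℕ × ℕ) : ℕ :=
  if p.1 = q.1 then Nat.dist p.2 q.2 else Nat.dist p.1 q.1 + p.2 + q.2

theorem combDist_self (p : ℕ × ℕ) : combDist p p = 0 := by
  simp [combDist]

theorem combDist_comm (p q : ℕ × ℕ) : combDist p q = combDist q p := by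
  simp only [combDist, Nat.dist]
  split_ifs <;> omega

theorem combDist_of_combAdj {p q : ℕ × ℕ} (h : CombAdj p q) : combDist p q = 1 := by
  simp only [CombAdj] at h
  simp only [combDist, Nat.dist]
  split_ifs <;> omega

/-- The neighbour of `p` on the path from `p` to `q` in the comb. -/
def combStep (p q : ℕ × ℕ) : ℕ × ℕ :=
  if p.1 = q.1 then (p.1, if p.2 < q.2 then p.2 + 1 else p.2 - 1)
  else if p.2 = 0 then (if p.1 < q.1 then p.1 + 1 else p.1 - 1, 0)
  else (p.1, p.2 - 1)

theorem combStep_le (p q : ℕ × ℕ) :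
    (combStep p q).1 ≤ max p.1 q.1 ∧ (combStep p q).2 ≤ max p.2 q.2 := by
  simp only [combStep]
  split_ifs <;> omega

theorem combAdj_combStep {p q : ℕ × ℕ} (hpq : p ≠ q) : CombAdj p (combStep p q) := by
  rw [ne_eq, Prod.ext_iff] at hpq
  simp only [CombAdj, combStep]
  split_ifs <;> omega

theorem combDist_combStep {p q : ℕ × ℕ} (hpq : p ≠ q) :
    combDist (combStep p q) q + 1 = combDist p q := by
  rw [ne_eq, Prod.ext_iff] at hpq
  simp only [combDist, combStep, Nat.dist]
  split_ifs <;> omega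

theorem combDist_of_combAdj_of_ne_combStep {p q s : ℕ × ℕ} (hs : CombAdj p s)
    (hne : s ≠ combStep p q) : combDist s q = combDist p q + 1 := by
  rw [ne_eq, Prod.ext_iff] at hne
  simp only [CombAdj] at hs
  simp only [combDist, combStep, Nat.dist] at hne ⊢
  split_ifs at hne ⊢ <;> omega

section PathComb

variable {n m : ℕ}

def pathComb (n m : ℕ) (hm : 0 < m) : SimpleGraph (Σ _ : Fin n, Fin m) :=
  composite (fun _ : Fin n => Fin m) (fun _ => SimpleGraph.pathGraph m)
    (fun _ => (⟨0, hm⟩ : Fin m)) (SimpleGraph.pathGraph n)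

def combCoords (u : Σ _ : Fin n, Fin m) : ℕ × ℕ := ((u.1 : ℕ), (u.2 : ℕ))

theorem combCoords_injective : Function.Injective (combCoords (n := n) (m := m)) := by
  rintro ⟨i, j⟩ ⟨k, l⟩ h
  simp only [combCoords, Prod.mk.injEq, Fin.val_inj] at h
  obtain ⟨rfl, rfl⟩ := h
  rfl

theorem pathComb_adj_iff (hm : 0 < m) {u w : Σ _ : Fin n, Fin m} :
    (pathComb n m hm).Adj u w ↔ CombAdj (combCoords u) (combCoords w) := by
  rw [pathComb, composite_const_adj, SimpleGraph.pathGraph_adj, SimpleGraph.pathGraph_adj,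
    Fin.ext_iff, Fin.ext_iff, Fin.ext_iff]
  rfl

theorem isTreeDistance_pathComb (hm : 0 < m) :
    (pathComb n m hm).IsTreeDistance fun u v => (combDist (combCoords u) (combCoords v) : ℝ) where
  self_eq_zero u := by simp [combDist_self]
  symm u v := by rw [combDist_comm]
  adj_eq_one u w h := by rw [combDist_of_combAdj ((pathComb_adj_iff hm).1 h), Nat.cast_one]
  exists_step u v huv := by
    have hne : combCoords u ≠ combCoords v := combCoords_injective.ne huv
    obtain ⟨h1, h2⟩ := combStep_le (combCoords u) (combCoords v)
    let w : Σ _ : Fin n, Fin m :=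
      ⟨⟨_, h1.trans_lt (max_lt u.1.2 v.1.2)⟩, ⟨_, h2.trans_lt (max_lt u.2.2 v.2.2)⟩⟩
    have hw : combCoords w = combStep (combCoords u) (combCoords v) := rfl
    refine ⟨w, (pathComb_adj_iff hm).2 (hw ▸ combAdj_combStep hne), ?_, fun w' hadj hw' => ?_⟩
    · rw [hw, ← combDist_combStep hne]
      push_cast
      ring
    · rw [combDist_of_combAdj_of_ne_combStep ((pathComb_adj_iff hm).1 hadj)
        (hw ▸ combCoords_injective.ne hw'), Nat.cast_succ]

end PathComb

section Sums

open Finset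

theorem sum_range_natCast (k : ℕ) : ∑ b ∈ range k, (b : ℝ) = k * (k - 1) / 2 := by
  induction k with
  | zero => simp
  | succ k ih =>
    rw [sum_range_succ, ih]
    push_cast
    ring

theorem sum_range_sum_range_natDist (k : ℕ) :
    ∑ a ∈ range k, ∑ b ∈ range k, (Nat.dist a b : ℝ) = k * ((k : ℝ) ^ 2 - 1) / 3 := by
  induction k with
  | zero => simp
  | succ k ih =>
    have hrow : ∑ b ∈ range k, (Nat.dist b k : ℝ) = k * k - k * (k - 1) / 2 := by
      rw [sum_congr rfl fun b hb => by
          rw [Nat.dist_eq_sub_of_le (mem_range.1 hb).le, Nat.cast_sub (mem_range.1 hb).le],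
        sum_sub_distrib, sum_const, card_range, nsmul_eq_mul, sum_range_natCast]
    simp only [sum_range_succ, sum_add_distrib, ih, hrow, Nat.dist_comm k, Nat.dist_self]
    push_cast
    ring

theorem sum_combDist_tooth_pair (m i k : ℕ) :
    ∑ j ∈ range m, ∑ l ∈ range m, (combDist (i, j) (k, l) : ℝ) =
      m ^ 2 * Nat.dist i k + m ^ 2 * (m - 1) +
        if i = k then m * ((m : ℝ) ^ 2 - 1) / 3 - m ^ 2 * (m - 1) else 0 := by
  by_cases hik : i = k
  · subst hik
    simp only [combDist, if_true, sum_range_sum_range_natDist, Nat.dist_self]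
    push_cast
    ring
  · simp only [combDist, hik, if_false]
    push_cast
    simp only [sum_add_distrib, sum_const, card_range, nsmul_eq_mul, ← mul_sum,
      sum_range_natCast]
    ring

theorem sum_combDist_box (n m : ℕ) :
    ∑ i ∈ range n, ∑ j ∈ range m, ∑ k ∈ range n, ∑ l ∈ range m,
      (combDist (i, j) (k, l) : ℝ) =
      m ^ 2 * (n * ((n : ℝ) ^ 2 - 1) / 3) + n ^ 2 * (m ^ 2 * (m - 1)) +
        n * (m * ((m : ℝ) ^ 2 - 1) / 3 - m ^ 2 * (m - 1)) := by
  simp only [sum_comm (s := range m) (t := range n), sum_combDist_tooth_pair, sum_add_distrib,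
    sum_ite_eq, mem_range, ← mul_sum, sum_range_sum_range_natDist, sum_const, card_range,
    nsmul_eq_mul]
  rw [sum_ite_of_true fun _ => mem_range.1, sum_const, card_range, nsmul_eq_mul]
  ring

theorem sum_sum_combDist_combCoords (n m : ℕ) :
    ∑ u : Σ _ : Fin n, Fin m, ∑ v : Σ _ : Fin n, Fin m,
      (combDist (combCoords u) (combCoords v) : ℝ) =
      m ^ 2 * (n * ((n : ℝ) ^ 2 - 1) / 3) + n ^ 2 * (m ^ 2 * (m - 1)) +
        n * (m * ((m : ℝ) ^ 2 - 1) / 3 - m ^ 2 * (m - 1)) := by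
  rw [← sum_combDist_box]
  simp only [Fintype.sum_sigma, combCoords, ← Fin.sum_univ_eq_sum_range]

end Sums

theorem coherence_composite_path_of_paths_attains_upper_bound_general
    {n m : ℕ} (hm : 0 < m) :
    coherence (composite (fun _ : Fin n => Fin m)
        (fun _ => SimpleGraph.pathGraph m) (fun _ => (⟨0, hm⟩ : Fin m))
        (SimpleGraph.pathGraph n)) =
      (n : ℝ) * (m : ℝ) * ((m : ℝ) ^ 2 - 1) / (12 * ((n * m : ℕ) : ℝ)) +
      (n : ℝ) * (m : ℝ) ^ 2 * ((n : ℝ) ^ 2 - 1) / (12 * ((n * m : ℕ) : ℝ)) +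
      (n : ℝ) * (m : ℝ) ^ 2 * ((m : ℝ) - 1) * ((n : ℝ) - 1) / (4 * ((n * m : ℕ) : ℝ)) := by
  have hcard : Fintype.card (Σ _ : Fin n, Fin m) = n * m := by simp
  change coherence (pathComb n m hm) = _
  rw [coherence, effRes, hcard]
  simp only [(isTreeDistance_pathComb hm).resistance_eq, sum_sum_combDist_combCoords]
  push_cast
  ring

/-- The composite graph made of `n` path subgraphs on `m`
vertices each (bridge node an endpoint of the path) over a path backbone
attains the upper bound on coherence. -/
theorem coherence_composite_path_of_paths_attains_upper_bound
    {n m : ℕ} (hn : 2 ≤ n) (hm : 0 < m) :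
    coherence (composite (fun _ : Fin n => Fin m)
        (fun _ => SimpleGraph.pathGraph m) (fun _ => (⟨0, hm⟩ : Fin m))
        (SimpleGraph.pathGraph n)) =
      (n : ℝ) * (m : ℝ) * ((m : ℝ) ^ 2 - 1) / (12 * ((n * m : ℕ) : ℝ)) +
      (n : ℝ) * (m : ℝ) ^ 2 * ((n : ℝ) ^ 2 - 1) / (12 * ((n * m : ℕ) : ℝ)) +
      (n : ℝ) * (m : ℝ) ^ 2 * ((m : ℝ) - 1) * ((n : ℝ) - 1) / (4 * ((n * m : ℕ) : ℝ)) :=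
  coherence_composite_path_of_paths_attains_upper_bound_general hm
end
end
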